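/- arXiv:1309.0003 — 2 statements merged into one kernel-verified Lean document; each statement's English description precedes it below -/
import Mathlib

section
/- Let X_1, ..., X_n be independent random vectors of dimension k, where X_i = (X_{1,i}, ..., X_{k,i}), such that for every i, X_{ℓ,i} ≥ 0 for all ℓ and Σ_{ℓ=1}^k X_{ℓ,i} ≤ 1. Let μ_ℓ = (1/n) Σ_{i=1}^n E[X_{ℓ,i}] for ℓ = 1, ..., k and μ_0 = 1 − Σ_{ℓ=1}^k μ_ℓ. Then for arbitrary real numbers t_1, ..., t_k, ∏_{i=1}^n E[∏_{ℓ=1}^k exp(t_ℓ X_{ℓ,i})] ≤ (μ_0 + Σ_{ℓ=1}^k μ_ℓ exp(t_ℓ))^n. -/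
/-!
Convexity of `exp` bounds each factor: `∑ ℓ t_ℓ X_ℓ` is the convex combination of `0` and the
`t_ℓ` with weights `1 - ∑ ℓ X_ℓ` and `X_ℓ`, so `∏ ℓ exp (t_ℓ X_ℓ) ≤ 1 + ∑ ℓ X_ℓ (exp t_ℓ - 1)`
pointwise, and taking expectations gives `1 + ∑ ℓ E[X_ℓ] (exp t_ℓ - 1)`. By AM-GM the product of
these `n` bounds is at most the `n`-th power of their mean, which is `μ₀ + ∑ ℓ μ_ℓ exp t_ℓ`.
-/

open MeasureTheory ProbabilityTheory Finset

namespace Real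

theorem prod_le_mean_pow {ι : Type*} (s : Finset ι) {z : ι → ℝ} (hz : ∀ i ∈ s, 0 ≤ z i) :
    ∏ i ∈ s, z i ≤ ((∑ i ∈ s, z i) / #s) ^ #s := by
  rcases s.eq_empty_or_nonempty with rfl | hs
  · simp
  have hcard : (#s : ℝ) ≠ 0 := by exact_mod_cast hs.card_pos.ne'
  have amgm := geom_mean_le_arith_mean s (fun _ => 1) z (fun _ _ => zero_le_one)
    (by simpa using hs.card_pos) hz
  simp only [rpow_one, sum_const, nsmul_eq_mul, mul_one, one_mul] at amgm
  calc ∏ i ∈ s, z i = ((∏ i ∈ s, z i) ^ (#s : ℝ)⁻¹) ^ #s :=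
        (rpow_inv_natCast_pow (prod_nonneg hz) (by exact_mod_cast hcard)).symm
    _ ≤ ((∑ i ∈ s, z i) / #s) ^ #s := by gcongr; exact rpow_nonneg (prod_nonneg hz) _

theorem exp_sum_mul_le_one_add_sum_mul {ι : Type*} (s : Finset ι) (t x : ι → ℝ)
    (hx : ∀ i ∈ s, 0 ≤ x i) (hs : ∑ i ∈ s, x i ≤ 1) :
    exp (∑ i ∈ s, t i * x i) ≤ 1 + ∑ i ∈ s, x i * (exp (t i) - 1) := by
  have jensen := convexOn_exp.map_add_sum_le (p := t) (q := 0) hx (sub_add_cancel _ _)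
    (fun _ _ => Set.mem_univ _) (sub_nonneg.2 hs) (Set.mem_univ _)
  simp only [smul_eq_mul, mul_zero, zero_add, exp_zero, mul_one] at jensen
  simp only [mul_sub, mul_one, sum_sub_distrib, mul_comm (t _)]
  linarith

end Real

section MomentGeneratingFunction

variable {Ω ι : Type*} [MeasurableSpace Ω] {P : Measure Ω} [Fintype ι] {Y : ι → Ω → ℝ}

theorem integrable_of_nonneg_of_sum_le_one [IsFiniteMeasure P] (hmeas : ∀ ℓ, Measurable (Y ℓ))
    (hnonneg : ∀ ℓ ω, 0 ≤ Y ℓ ω) (hsum : ∀ ω, ∑ ℓ, Y ℓ ω ≤ 1) (ℓ : ι) :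
    Integrable (Y ℓ) P :=
  .of_bound (hmeas ℓ).aestronglyMeasurable 1 <| .of_forall fun ω => by
    rw [Real.norm_of_nonneg (hnonneg ℓ ω)]
    exact (single_le_sum (fun m _ => hnonneg m ω) (mem_univ ℓ)).trans (hsum ω)

theorem integral_prod_exp_mul_le [IsProbabilityMeasure P] (hmeas : ∀ ℓ, Measurable (Y ℓ))
    (hnonneg : ∀ ℓ ω, 0 ≤ Y ℓ ω) (hsum : ∀ ω, ∑ ℓ, Y ℓ ω ≤ 1) (t : ι → ℝ) :
    ∫ ω, ∏ ℓ, Real.exp (t ℓ * Y ℓ ω) ∂P ≤ 1 + ∑ ℓ, (∫ ω, Y ℓ ω ∂P) * (Real.exp (t ℓ) - 1) := by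
  have hint := integrable_of_nonneg_of_sum_le_one hmeas hnonneg hsum (P := P)
  have hint_sum : Integrable (fun ω => ∑ ℓ, Y ℓ ω * (Real.exp (t ℓ) - 1)) P :=
    integrable_finsetSum _ fun ℓ _ => (hint ℓ).mul_const _
  calc ∫ ω, ∏ ℓ, Real.exp (t ℓ * Y ℓ ω) ∂P
      ≤ ∫ ω, 1 + ∑ ℓ, Y ℓ ω * (Real.exp (t ℓ) - 1) ∂P := by
        refine integral_mono_of_nonneg (.of_forall fun ω => by positivity)
          ((integrable_const 1).add hint_sum) (.of_forall fun ω => ?_)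
        dsimp only
        rw [← Real.exp_sum]
        exact Real.exp_sum_mul_le_one_add_sum_mul _ t _ (fun ℓ _ => hnonneg ℓ ω) (hsum ω)
    _ = 1 + ∑ ℓ, (∫ ω, Y ℓ ω ∂P) * (Real.exp (t ℓ) - 1) := by
        rw [integral_add (integrable_const 1) hint_sum,
          integral_finsetSum _ fun ℓ _ => (hint ℓ).mul_const _]
        simp [integral_mul_const]

end MomentGeneratingFunction

theorem prod_mgf_le_general
    {Ω : Type*} [MeasureSpace Ω] [IsProbabilityMeasure (ℙ : Measure Ω)]
    (n k : ℕ) (hn : 0 < n)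
    (X : Fin n → Fin k → Ω → ℝ)
    (hmeas : ∀ i ℓ, Measurable (X i ℓ))
    (hnonneg : ∀ i ℓ ω, 0 ≤ X i ℓ ω)
    (hsum : ∀ i ω, ∑ ℓ, X i ℓ ω ≤ 1)
    (μ : Fin k → ℝ) (hμ : ∀ ℓ, μ ℓ = (∑ i, ∫ ω, X i ℓ ω) / n)
    (μ0 : ℝ) (hμ0 : μ0 = 1 - ∑ ℓ, μ ℓ)
    (t : Fin k → ℝ) :
    ∏ i, ∫ ω, ∏ ℓ, Real.exp (t ℓ * X i ℓ ω) ≤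
      (μ0 + ∑ ℓ, μ ℓ * Real.exp (t ℓ)) ^ n := by
  set a : Fin n → ℝ := fun i => 1 + ∑ ℓ, (∫ ω, X i ℓ ω) * (Real.exp (t ℓ) - 1)
  have hmgf i : ∫ ω, ∏ ℓ, Real.exp (t ℓ * X i ℓ ω) ≤ a i :=
    integral_prod_exp_mul_le (hmeas i) (hnonneg i) (hsum i) t
  have hmgf_nonneg i : 0 ≤ ∫ ω, ∏ ℓ, Real.exp (t ℓ * X i ℓ ω) := by positivity
  have hsum_a : ∑ i, a i = n * (1 + ∑ ℓ, μ ℓ * (Real.exp (t ℓ) - 1)) := by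
    simp only [a, hμ, sum_add_distrib, sum_const, card_univ, Fintype.card_fin, nsmul_eq_mul,
      mul_one, sum_comm (γ := Fin n), ← sum_mul, mul_add, mul_sum, div_mul_eq_mul_div,
      mul_div_cancel₀ _ (show (n : ℝ) ≠ 0 by positivity)]
  have hmean : (∑ i, a i) / n = μ0 + ∑ ℓ, μ ℓ * Real.exp (t ℓ) := by
    rw [hsum_a, mul_div_cancel_left₀ _ (by positivity), hμ0]
    simp only [mul_sub, mul_one, sum_sub_distrib]
    ring
  calc ∏ i, ∫ ω, ∏ ℓ, Real.exp (t ℓ * X i ℓ ω)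
      ≤ ∏ i, a i := prod_le_prod (fun i _ => hmgf_nonneg i) fun i _ => hmgf i
    _ ≤ ((∑ i, a i) / n) ^ n := by
        simpa using Real.prod_le_mean_pow univ fun i _ => (hmgf_nonneg i).trans (hmgf i)
    _ = (μ0 + ∑ ℓ, μ ℓ * Real.exp (t ℓ)) ^ n := by rw [hmean]

/-- Bound on the product of multivariate moment generating functions of independent
random vectors in the simplex:
`∏ᵢ E[∏_ℓ exp(t_ℓ X_{ℓ,i})] ≤ (μ₀ + ∑_ℓ μ_ℓ exp(t_ℓ))^n`. -/
theorem prod_mgf_le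
    {Ω : Type*} [MeasureSpace Ω] [IsProbabilityMeasure (ℙ : Measure Ω)]
    (n k : ℕ) (hn : 0 < n)
    (X : Fin n → Fin k → Ω → ℝ)
    (hmeas : ∀ i ℓ, Measurable (X i ℓ))
    (hindep : iIndepFun
      (fun i => fun ω ℓ => X i ℓ ω) ℙ)
    (hnonneg : ∀ i ℓ ω, 0 ≤ X i ℓ ω)
    (hsum : ∀ i ω, ∑ ℓ, X i ℓ ω ≤ 1)
    (μ : Fin k → ℝ) (hμ : ∀ ℓ, μ ℓ = (∑ i, ∫ ω, X i ℓ ω) / n)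
    (μ0 : ℝ) (hμ0 : μ0 = 1 - ∑ ℓ, μ ℓ)
    (t : Fin k → ℝ) :
    ∏ i, ∫ ω, ∏ ℓ, Real.exp (t ℓ * X i ℓ ω) ≤
      (μ0 + ∑ ℓ, μ ℓ * Real.exp (t ℓ)) ^ n :=
  prod_mgf_le_general n k hn X hmeas hnonneg hsum μ hμ μ0 hμ0 t
end

section
/- Let X_1, ..., X_n be independent random vectors of dimension k, where X_i = (X_{1,i}, ..., X_{k,i}), such that for every i, X_{ℓ,i} ≥ 0 for all ℓ and Σ_{ℓ=1}^k X_{ℓ,i} ≤ 1. Let X̄_n = (1/n) Σ_{i=1}^n X_i, μ_ℓ = (1/n) Σ_{i=1}^n E[X_{ℓ,i}], μ_0 = 1 − Σ_{ℓ=1}^k μ_ℓ, and let z_1, ..., z_k be real numbers with z = (z_1, ..., z_k). Then for all t_1 ≤ 0, ..., t_k ≤ 0, Pr{X̄_n ≤ z componentwise} ≤ exp(n M(t_1, ..., t_k)), where M(t_1, ..., t_k) = − Σ_{ℓ=1}^k t_ℓ z_ℓ + ln(μ_0 + Σ_{ℓ=1}^k μ_ℓ exp(t_ℓ)). -/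
/-!
With `Y_i = ∑_ℓ t_ℓ X_{ℓ,i}` and `t ≤ 0`, the event `X̄_n ≤ z` forces `∑_i Y_i ≥ n ∑_ℓ t_ℓ z_ℓ`, so
the Chernoff bound and independence give `Pr{X̄_n ≤ z} ≤ e^{-n ∑_ℓ t_ℓ z_ℓ} ∏_i E[e^{Y_i}]`.
As `X_i` lies in `{x ≥ 0, ∑_ℓ x_ℓ ≤ 1}`, convexity of `exp` gives
`e^{Y_i} ≤ 1 - ∑_ℓ X_{ℓ,i} + ∑_ℓ X_{ℓ,i} e^{t_ℓ}`; the expectations `a_i` of these right-hand sides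
average to `μ₀ + ∑_ℓ μ_ℓ e^{t_ℓ}`, and AM-GM bounds `∏_i a_i` by the `n`-th power of that average.
-/

open MeasureTheory ProbabilityTheory Finset Real

section

variable {ι κ Ω : Type*}

/-- The moment generating function at `t` of the random vector equal to the basis vector `e_ℓ`
with probability `v ℓ`, and to `0` with the remaining probability `1 - ∑ ℓ, v ℓ`. -/
noncomputable def oneHotMgf [Fintype ι] (v t : ι → ℝ) : ℝ :=
  1 - ∑ ℓ, v ℓ + ∑ ℓ, v ℓ * exp (t ℓ)

theorem exp_sum_mul_le_oneHotMgf [Fintype ι] {x : ι → ℝ} (hx : ∀ ℓ, 0 ≤ x ℓ)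
    (hx_sum : ∑ ℓ, x ℓ ≤ 1) (t : ι → ℝ) :
    exp (∑ ℓ, t ℓ * x ℓ) ≤ oneHotMgf x t := by
  -- Jensen for `exp` at the points `0` (index `none`) and `t ℓ` (index `some ℓ`)
  have h := convexOn_exp.map_sum_le (t := (univ : Finset (Option ι)))
    (w := fun o => o.elim (1 - ∑ ℓ, x ℓ) x) (p := fun o => o.elim 0 t)
    (fun o _ => by cases o with
      | none => simpa using hx_sum
      | some ℓ => exact hx ℓ)
    (by simp [Fintype.sum_option])
    (fun o _ => Set.mem_univ _)
  simpa [oneHotMgf, Fintype.sum_option, smul_eq_mul, mul_comm] using h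

theorem oneHotMgf_mean [Fintype ι] {s : Finset κ} (hs : s.Nonempty) (m : κ → ι → ℝ)
    (t : ι → ℝ) :
    oneHotMgf (fun ℓ => (∑ i ∈ s, m i ℓ) / #s) t = (∑ i ∈ s, oneHotMgf (m i) t) / #s := by
  have hs' : (#s : ℝ) ≠ 0 := by exact_mod_cast hs.card_pos.ne'
  simp only [oneHotMgf, sum_add_distrib, sum_sub_distrib, sum_const, nsmul_eq_mul, mul_one,
    div_mul_eq_mul_div, ← sum_div, sum_mul]
  rw [sum_comm (f := fun i ℓ => m i ℓ), sum_comm (f := fun i ℓ => m i ℓ * exp (t ℓ))]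
  field_simp

theorem card_mul_sum_mul_le_sum_sum_mul [Fintype ι] {s : Finset κ} (hs : s.Nonempty)
    {t z : ι → ℝ} (ht : ∀ ℓ, t ℓ ≤ 0) {x : κ → ι → ℝ} (hx : ∀ ℓ, (∑ i ∈ s, x i ℓ) / #s ≤ z ℓ) :
    #s * ∑ ℓ, t ℓ * z ℓ ≤ ∑ i ∈ s, ∑ ℓ, t ℓ * x i ℓ := by
  have hcard : (0 : ℝ) < #s := by exact_mod_cast hs.card_pos
  calc (#s : ℝ) * ∑ ℓ, t ℓ * z ℓ = ∑ ℓ, t ℓ * (#s * z ℓ) := by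
        rw [mul_sum]; exact sum_congr rfl fun ℓ _ => by ring
    _ ≤ ∑ ℓ, t ℓ * ∑ i ∈ s, x i ℓ := sum_le_sum fun ℓ _ =>
        mul_le_mul_of_nonpos_left ((div_le_iff₀' hcard).1 (hx ℓ)) (ht ℓ)
    _ = ∑ i ∈ s, ∑ ℓ, t ℓ * x i ℓ := by simp only [mul_sum]; exact sum_comm

theorem Real.prod_le_arith_mean_pow (s : Finset κ) {z : κ → ℝ} (hz : ∀ i ∈ s, 0 ≤ z i) :
    ∏ i ∈ s, z i ≤ ((∑ i ∈ s, z i) / #s) ^ #s := by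
  rcases s.eq_empty_or_nonempty with rfl | hs
  · simp
  have hcard : #s ≠ 0 := hs.card_pos.ne'
  have hgm := geom_mean_le_arith_mean_weighted s (fun _ => (#s : ℝ)⁻¹) z
    (fun _ _ => by positivity) (by simp [hcard]) hz
  rw [finsetProd_rpow s z hz, ← mul_sum, inv_mul_eq_div] at hgm
  calc ∏ i ∈ s, z i = ((∏ i ∈ s, z i) ^ (#s : ℝ)⁻¹) ^ #s :=
        (rpow_inv_natCast_pow (prod_nonneg hz) hcard).symm
    _ ≤ ((∑ i ∈ s, z i) / #s) ^ #s := pow_le_pow_left₀ (rpow_nonneg (prod_nonneg hz) _) hgm _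

theorem ProbabilityTheory.iIndepFun.measureReal_sum_ge_le_exp_mul_prod_mgf {m : MeasurableSpace Ω}
    {P : Measure Ω} {Y : κ → Ω → ℝ} (hindep : iIndepFun Y P)
    (hmeas : ∀ i, Measurable (Y i)) (s : Finset κ) {t : ℝ} (ht : 0 ≤ t)
    (hint : ∀ i ∈ s, Integrable (fun ω => exp (t * Y i ω)) P) (ε : ℝ) :
    P.real {ω | ε ≤ ∑ i ∈ s, Y i ω} ≤ exp (-t * ε) * ∏ i ∈ s, mgf (Y i) P t := by
  have := hindep.isProbabilityMeasure
  rw [← hindep.mgf_sum hmeas]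
  simpa using measure_ge_le_exp_mul_mgf ε ht (hindep.integrable_exp_mul_sum hmeas hint)

section SubprobabilityVector

variable [Fintype ι] {m : MeasurableSpace Ω} {P : Measure Ω} {V : ι → Ω → ℝ}

theorem integrable_of_nonneg_of_sum_le_one_s13 [IsFiniteMeasure P] (hV : ∀ ℓ, Measurable (V ℓ))
    (hV_nonneg : ∀ ℓ ω, 0 ≤ V ℓ ω) (hV_sum : ∀ ω, ∑ ℓ, V ℓ ω ≤ 1) (ℓ : ι) :
    Integrable (V ℓ) P :=
  .of_bound (hV ℓ).aestronglyMeasurable 1 <| ae_of_all _ fun ω => by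
    rw [norm_of_nonneg (hV_nonneg ℓ ω)]
    exact (single_le_sum (fun j _ => hV_nonneg j ω) (mem_univ ℓ)).trans (hV_sum ω)

theorem integrable_oneHotMgf [IsFiniteMeasure P] (hV : ∀ ℓ, Integrable (V ℓ) P) (t : ι → ℝ) :
    Integrable (fun ω => oneHotMgf (fun ℓ => V ℓ ω) t) P := by
  unfold oneHotMgf
  fun_prop

theorem integral_oneHotMgf [IsProbabilityMeasure P] (hV : ∀ ℓ, Integrable (V ℓ) P)
    (t : ι → ℝ) :
    ∫ ω, oneHotMgf (fun ℓ => V ℓ ω) t ∂P = oneHotMgf (fun ℓ => ∫ ω, V ℓ ω ∂P) t := by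
  unfold oneHotMgf
  rw [integral_add (by fun_prop) (by fun_prop), integral_sub (by fun_prop) (by fun_prop),
    integral_finsetSum _ fun ℓ _ => hV ℓ,
    integral_finsetSum _ fun ℓ _ => (hV ℓ).mul_const _]
  simp [integral_mul_const]

theorem integrable_exp_sum_mul [IsFiniteMeasure P] (hV : ∀ ℓ, Measurable (V ℓ))
    (hV_nonneg : ∀ ℓ ω, 0 ≤ V ℓ ω) (hV_sum : ∀ ω, ∑ ℓ, V ℓ ω ≤ 1) (t : ι → ℝ) :
    Integrable (fun ω => exp (∑ ℓ, t ℓ * V ℓ ω)) P :=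
  (integrable_oneHotMgf (integrable_of_nonneg_of_sum_le_one_s13 hV hV_nonneg hV_sum) t).mono'
    (by fun_prop) <| ae_of_all _ fun ω => by
      rw [norm_of_nonneg (exp_pos _).le]
      exact exp_sum_mul_le_oneHotMgf (fun ℓ => hV_nonneg ℓ ω) (hV_sum ω) t

theorem mgf_sum_mul_le_oneHotMgf [IsProbabilityMeasure P] (hV : ∀ ℓ, Measurable (V ℓ))
    (hV_nonneg : ∀ ℓ ω, 0 ≤ V ℓ ω) (hV_sum : ∀ ω, ∑ ℓ, V ℓ ω ≤ 1) (t : ι → ℝ) :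
    mgf (fun ω => ∑ ℓ, t ℓ * V ℓ ω) P 1 ≤ oneHotMgf (fun ℓ => ∫ ω, V ℓ ω ∂P) t := by
  have hint := integrable_of_nonneg_of_sum_le_one_s13 (P := P) hV hV_nonneg hV_sum
  rw [← integral_oneHotMgf hint]
  simp only [mgf, one_mul]
  exact integral_mono (integrable_exp_sum_mul hV hV_nonneg hV_sum t)
    (integrable_oneHotMgf hint t) fun ω =>
      exp_sum_mul_le_oneHotMgf (fun ℓ => hV_nonneg ℓ ω) (hV_sum ω) t

end SubprobabilityVector

theorem measureReal_mean_le_le_exp_mul {m : MeasurableSpace Ω} {P : Measure Ω} [Fintype ι]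
    {X : κ → ι → Ω → ℝ} (hmeas : ∀ i ℓ, Measurable (X i ℓ))
    (hindep : iIndepFun (fun i ω ℓ => X i ℓ ω) P) (hnonneg : ∀ i ℓ ω, 0 ≤ X i ℓ ω)
    (hsum : ∀ i ω, ∑ ℓ, X i ℓ ω ≤ 1) {s : Finset κ} (hs : s.Nonempty) {t : ι → ℝ}
    (ht : ∀ ℓ, t ℓ ≤ 0) (z : ι → ℝ) :
    P.real {ω | ∀ ℓ, (∑ i ∈ s, X i ℓ ω) / #s ≤ z ℓ} ≤
      exp (#s * (-∑ ℓ, t ℓ * z ℓ +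
        log (oneHotMgf (fun ℓ => (∑ i ∈ s, ∫ ω, X i ℓ ω ∂P) / #s) t))) := by
  have := hindep.isProbabilityMeasure
  set Y : κ → Ω → ℝ := fun i ω => ∑ ℓ, t ℓ * X i ℓ ω
  set a : κ → ℝ := fun i => oneHotMgf (fun ℓ => ∫ ω, X i ℓ ω ∂P) t
  have hY_indep : iIndepFun Y P := hindep.comp (fun _ v => ∑ ℓ, t ℓ * v ℓ) fun _ => by fun_prop
  have hY_int : ∀ i, Integrable (fun ω => exp (1 * Y i ω)) P := fun i => by
    simpa only [one_mul] using integrable_exp_sum_mul (hmeas i) (hnonneg i) (hsum i) t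
  have hmgf : ∀ i, mgf (Y i) P 1 ≤ a i := fun i =>
    mgf_sum_mul_le_oneHotMgf (hmeas i) (hnonneg i) (hsum i) t
  have hmean_pos : 0 < (∑ i ∈ s, a i) / #s :=
    div_pos (sum_pos (fun i _ => (mgf_pos (hY_int i)).trans_le (hmgf i)) hs)
      (Nat.cast_pos.2 hs.card_pos)
  have hevent : {ω | ∀ ℓ, (∑ i ∈ s, X i ℓ ω) / #s ≤ z ℓ} ⊆
      {ω | #s * ∑ ℓ, t ℓ * z ℓ ≤ ∑ i ∈ s, Y i ω} := fun ω hω =>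
    card_mul_sum_mul_le_sum_sum_mul hs ht hω
  calc P.real {ω | ∀ ℓ, (∑ i ∈ s, X i ℓ ω) / #s ≤ z ℓ}
      ≤ P.real {ω | #s * ∑ ℓ, t ℓ * z ℓ ≤ ∑ i ∈ s, Y i ω} := measureReal_mono hevent
    _ ≤ exp (-(#s * ∑ ℓ, t ℓ * z ℓ)) * ∏ i ∈ s, mgf (Y i) P 1 := by
        simpa using hY_indep.measureReal_sum_ge_le_exp_mul_prod_mgf (fun i => by fun_prop) s
          zero_le_one (fun i _ => hY_int i) (#s * ∑ ℓ, t ℓ * z ℓ)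
    _ ≤ exp (-(#s * ∑ ℓ, t ℓ * z ℓ)) * ((∑ i ∈ s, a i) / #s) ^ #s := by
        gcongr
        calc ∏ i ∈ s, mgf (Y i) P 1 ≤ ∏ i ∈ s, a i :=
              prod_le_prod (fun _ _ => mgf_nonneg) fun i _ => hmgf i
          _ ≤ ((∑ i ∈ s, a i) / #s) ^ #s :=
              prod_le_arith_mean_pow s fun i _ => mgf_nonneg.trans (hmgf i)
    _ = _ := by
        rw [oneHotMgf_mean hs, mul_add, exp_add, mul_neg, exp_nat_mul (log _), exp_log hmean_pos]

end

/-- Chernoff-type bound for independent random vectors in the simplex: for all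
`t₁ ≤ 0, ..., t_k ≤ 0`, `Pr{X̄ₙ ≤ z} ≤ exp(n M(t))`, where
`M(t) = − ∑_ℓ t_ℓ z_ℓ + ln(μ₀ + ∑_ℓ μ_ℓ exp(t_ℓ))`. -/
theorem chernoff_bound_le
    {Ω : Type*} [MeasureSpace Ω] [IsProbabilityMeasure (ℙ : Measure Ω)]
    (n k : ℕ) (hn : 0 < n)
    (X : Fin n → Fin k → Ω → ℝ)
    (hmeas : ∀ i ℓ, Measurable (X i ℓ))
    (hindep : iIndepFun
      (fun i => fun ω ℓ => X i ℓ ω) ℙ)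
    (hnonneg : ∀ i ℓ ω, 0 ≤ X i ℓ ω)
    (hsum : ∀ i ω, ∑ ℓ, X i ℓ ω ≤ 1)
    (μ : Fin k → ℝ) (hμ : ∀ ℓ, μ ℓ = (∑ i, ∫ ω, X i ℓ ω) / n)
    (μ0 : ℝ) (hμ0 : μ0 = 1 - ∑ ℓ, μ ℓ)
    (z : Fin k → ℝ)
    (M : (Fin k → ℝ) → ℝ)
    (hM : ∀ t, M t = -∑ ℓ, t ℓ * z ℓ +
      Real.log (μ0 + ∑ ℓ, μ ℓ * Real.exp (t ℓ)))
    (t : Fin k → ℝ) (ht : ∀ ℓ, t ℓ ≤ 0) :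
    ℙ {ω | ∀ ℓ, (∑ i, X i ℓ ω) / n ≤ z ℓ} ≤
      ENNReal.ofReal (Real.exp (n * M t)) := by
  have hbound := measureReal_mean_le_le_exp_mul hmeas hindep hnonneg hsum
    (univ_nonempty_iff.2 (Fin.pos_iff_nonempty.1 hn)) ht z
  rw [card_fin, ← funext hμ] at hbound
  rw [← ofReal_measureReal, hM, hμ0]
  exact ENNReal.ofReal_le_ofReal hbound
end
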